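/- arXiv:1106.5239 — 8 statements merged into one kernel-verified Lean document; each statement's English description precedes it below -/
import Mathlib

section
/- For every quadratic module M in the ring M_n(R) of n×n matrices over a commutative unital ring R, the intersection of M with the center R·I_n equals p(M)·I_n, where p(A) = e_1^T A e_1 is the (1,1)-entry map. -/
open Matrix

/-- A quadratic module in `M_n(R)`: a set of symmetric matrices containing `1`,
closed under addition and under congruence `A ↦ Bᵀ * A * B`. -/
def IsQM {n : ℕ} {R : Type*} [CommRing R] (M : Set (Matrix (Fin n) (Fin n) R)) : Prop :=
  (∀ A ∈ M, A.IsSymm) ∧ (1 : Matrix (Fin n) (Fin n) R) ∈ M ∧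
  (∀ a ∈ M, ∀ b ∈ M, a + b ∈ M) ∧
  ∀ (A : Matrix (Fin n) (Fin n) R), ∀ m ∈ M, Aᵀ * m * A ∈ M

theorem stmt0 {n : ℕ} [NeZero n] {R : Type*} [CommRing R]
    (M : Set (Matrix (Fin n) (Fin n) R)) (hM : IsQM M) :
    M ∩ (Set.range fun r : R => r • (1 : Matrix (Fin n) (Fin n) R)) =
      (fun r : R => r • (1 : Matrix (Fin n) (Fin n) R)) ''
        ((fun A : Matrix (Fin n) (Fin n) R => A 0 0) '' M) := by
  obtain ⟨hsym, hone, hadd, hcong⟩ := hM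
  have hzero : (0 : Matrix (Fin n) (Fin n) R) ∈ M := by
    have := hcong 0 1 hone
    simpa using this
  have hsum : ∀ (f : Fin n → Matrix (Fin n) (Fin n) R), (∀ i, f i ∈ M) →
      ∑ i, f i ∈ M := by
    intro f hf
    classical
    refine Finset.sum_induction f (· ∈ M) (fun x y hx hy => hadd x hx y hy) hzero ?_
    intro i _
    exact hf i
  ext X
  constructor
  · rintro ⟨hX, r, rfl⟩
    refine ⟨_, ⟨_, hX, rfl⟩, ?_⟩
    simp [Matrix.one_apply]
  · rintro ⟨_, ⟨A, hA, rfl⟩, rfl⟩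
    refine ⟨?_, A 0 0, rfl⟩
    have key : ∀ i : Fin n,
        (Matrix.single (0 : Fin n) i (1 : R))ᵀ * A *
          Matrix.single (0 : Fin n) i (1 : R) =
          A 0 0 • Matrix.single i i (1 : R) := by
      intro i
      ext a b
      simp [Matrix.mul_apply, Matrix.single, Matrix.transpose_apply,
        Finset.sum_ite_eq, Finset.sum_ite_eq', Finset.mul_sum, mul_comm, mul_left_comm]
      aesop
    have hsumeq : ∑ i : Fin n, A 0 0 • Matrix.single i i (1 : R) =
        A 0 0 • (1 : Matrix (Fin n) (Fin n) R) := by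
      rw [← Finset.smul_sum]
      congr 1
      ext a b
      by_cases h : a = b
      · subst h
        simp [Matrix.sum_apply, Matrix.single, Matrix.one_apply]
      · simp only [Matrix.sum_apply, Matrix.single, Matrix.one_apply,
          Matrix.of_apply, h, if_false]
        rw [Finset.sum_eq_zero]
        intro x _
        rcases eq_or_ne x a with rfl | hx
        · simp [h]
        · simp [hx]
    show A 0 0 • (1 : Matrix (Fin n) (Fin n) R) ∈ M
    rw [← hsumeq]
    apply hsum
    intro i
    rw [← key i]
    exact hcong _ A hA
end

section
/- For every subset S of the symmetric n×n matrices over a commutative unital ring R, the image p(M_S^n) of the quadratic module generated by S under the (1,1)-entry map equals the quadratic module in R generated by S' = {v^T A v : A ∈ S, v ∈ R^n}. -/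
open Matrix

/-- The smallest quadratic module of `M_n(R)` containing `S`. -/
def QMgen {n : ℕ} {R : Type*} [CommRing R] (S : Set (Matrix (Fin n) (Fin n) R)) :
    Set (Matrix (Fin n) (Fin n) R) :=
  ⋂₀ {M | IsQM M ∧ S ⊆ M}

/-- A quadratic module in a commutative ring `R`. -/
def IsQMR {R : Type*} [CommRing R] (M : Set R) : Prop :=
  1 ∈ M ∧ (∀ a ∈ M, ∀ b ∈ M, a + b ∈ M) ∧ ∀ r : R, ∀ m ∈ M, r ^ 2 * m ∈ M

/-- The smallest quadratic module of `R` containing `G`. -/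
def QMgenR {R : Type*} [CommRing R] (G : Set R) : Set R :=
  ⋂₀ {M | IsQMR M ∧ G ⊆ M}

/-!
For `⊆`: if `Q` is a quadratic module of `R`, the symmetric matrices whose quadratic form
`v ↦ vᵀ A v` takes values in `Q` form a quadratic module of `M_n(R)`; taking `Q = M_{S'}` it
contains `S`, hence `M_S^n`, and `A 0 0` is the value of the form at the first unit vector.
For `⊇`: the `(0,0)` entries of a quadratic module of `M_n(R)` form one of `R` (use the
congruence by `r • 1`), and `vᵀ A v` is an entry of `Cᵀ A C` for `C` the matrix all of whose
columns are `v`.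
-/

namespace Matrix

variable {m ι R : Type*} [Fintype m] [CommSemiring R]

theorem transpose_replicateCol_mul_mul_replicateCol (A : Matrix m m R) (v : m → R) :
    (replicateCol ι v)ᵀ * A * replicateCol ι v = of fun _ _ => v ⬝ᵥ A *ᵥ v := by
  rw [transpose_replicateCol, Matrix.mul_assoc, ← replicateCol_mulVec,
    replicateRow_mul_replicateCol]

theorem transpose_mul_mul_dotProduct_mulVec (A B : Matrix m m R) (v : m → R) :
    v ⬝ᵥ (Bᵀ * A * B) *ᵥ v = (B *ᵥ v) ⬝ᵥ A *ᵥ (B *ᵥ v) := by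
  rw [← mulVec_mulVec, ← mulVec_mulVec, dotProduct_mulVec, vecMul_transpose]

theorem dotProduct_one_mulVec_self [DecidableEq m] (v : m → R) :
    v ⬝ᵥ (1 : Matrix m m R) *ᵥ v = ∑ i, v i ^ 2 := by
  simp [dotProduct, sq]

theorem single_dotProduct_mulVec_single [DecidableEq m] (A : Matrix m m R) (i j : m) :
    Pi.single i 1 ⬝ᵥ A *ᵥ Pi.single j 1 = A i j := by
  rw [single_one_dotProduct, mulVec_single_one, col_apply]

theorem transpose_smul_one_mul_mul_smul_one [DecidableEq m] (A : Matrix m m R) (r : R) :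
    (r • (1 : Matrix m m R))ᵀ * A * (r • 1) = r ^ 2 • A := by
  simp [sq, smul_smul]

end Matrix

section QuadraticModule

variable {n : ℕ} {R : Type*} [CommRing R]

namespace IsQMR

variable {Q : Set R}

theorem sq_mem (hQ : IsQMR Q) (r : R) : r ^ 2 ∈ Q := by
  simpa using hQ.2.2 r 1 hQ.1

theorem zero_mem (hQ : IsQMR Q) : (0 : R) ∈ Q := by
  simpa using hQ.sq_mem 0

theorem sum_mem (hQ : IsQMR Q) {ι : Type*} (s : Finset ι) {f : ι → R}
    (hf : ∀ i ∈ s, f i ∈ Q) : ∑ i ∈ s, f i ∈ Q := by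
  classical
  induction s using Finset.induction_on with
  | empty => simpa using hQ.zero_mem
  | insert i s hi ih =>
    rw [Finset.sum_insert hi]
    exact hQ.2.1 _ (hf i (s.mem_insert_self i)) _ (ih fun j hj => hf j (s.mem_insert_of_mem hj))

end IsQMR

theorem isQMR_QMgenR (G : Set R) : IsQMR (QMgenR G) :=
  ⟨fun _ hM => hM.1.1, fun _ ha _ hb M hM => hM.1.2.1 _ (ha M hM) _ (hb M hM),
    fun r _ hm M hM => hM.1.2.2 r _ (hm M hM)⟩

theorem subset_QMgenR (G : Set R) : G ⊆ QMgenR G := fun _ ha _ hM => hM.2 ha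

theorem QMgenR_subset {G Q : Set R} (hQ : IsQMR Q) (hG : G ⊆ Q) : QMgenR G ⊆ Q :=
  fun _ ha => ha Q ⟨hQ, hG⟩

theorem isQM_setOf_isSymm : IsQM {A : Matrix (Fin n) (Fin n) R | A.IsSymm} :=
  ⟨fun _ hA => hA, isSymm_one, fun _ ha _ hb => ha.add hb, fun A m hm => by
    simp only [Set.mem_ofPred_eq, IsSymm, transpose_mul, transpose_transpose, hm.eq,
      Matrix.mul_assoc]⟩

theorem subset_QMgen (S : Set (Matrix (Fin n) (Fin n) R)) : S ⊆ QMgen S :=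
  fun _ hA _ hM => hM.2 hA

theorem QMgen_subset {S M : Set (Matrix (Fin n) (Fin n) R)} (hM : IsQM M) (hS : S ⊆ M) :
    QMgen S ⊆ M :=
  fun _ hA => hA M ⟨hM, hS⟩

theorem isQM_QMgen {S : Set (Matrix (Fin n) (Fin n) R)} (hS : ∀ A ∈ S, A.IsSymm) :
    IsQM (QMgen S) :=
  ⟨fun _ hA => QMgen_subset isQM_setOf_isSymm hS hA, fun _ hM => hM.1.2.1,
    fun _ ha _ hb M hM => hM.1.2.2.1 _ (ha M hM) _ (hb M hM),
    fun A _ hm M hM => hM.1.2.2.2 A _ (hm M hM)⟩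

theorem IsQM.isQMR_image_apply {M : Set (Matrix (Fin n) (Fin n) R)} (hM : IsQM M) (i : Fin n) :
    IsQMR ((fun A => A i i) '' M) := by
  refine ⟨⟨1, hM.2.1, one_apply_eq i⟩, ?_, ?_⟩
  · rintro _ ⟨A, hA, rfl⟩ _ ⟨B, hB, rfl⟩
    exact ⟨A + B, hM.2.2.1 A hA B hB, rfl⟩
  · rintro r _ ⟨A, hA, rfl⟩
    refine ⟨_, hM.2.2.2 (r • 1) A hA, ?_⟩
    simp only [transpose_smul_one_mul_mul_smul_one, Matrix.smul_apply, smul_eq_mul]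

theorem IsQMR.isQM_setOf_dotProduct_mulVec_mem {Q : Set R} (hQ : IsQMR Q) :
    IsQM {A : Matrix (Fin n) (Fin n) R | A.IsSymm ∧ ∀ v, v ⬝ᵥ A *ᵥ v ∈ Q} := by
  refine ⟨fun _ hA => hA.1, ⟨isSymm_one, fun v => ?_⟩, ?_, ?_⟩
  · rw [dotProduct_one_mulVec_self]
    exact hQ.sum_mem _ fun i _ => hQ.sq_mem (v i)
  · rintro A ⟨hA, hAQ⟩ B ⟨hB, hBQ⟩
    refine ⟨hA.add hB, fun v => ?_⟩
    rw [add_mulVec, dotProduct_add]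
    exact hQ.2.1 _ (hAQ v) _ (hBQ v)
  · rintro A B ⟨hB, hBQ⟩
    refine ⟨isQM_setOf_isSymm.2.2.2 A B hB, fun v => ?_⟩
    rw [transpose_mul_mul_dotProduct_mulVec]
    exact hBQ (A *ᵥ v)

end QuadraticModule

theorem stmt1 {n : ℕ} [NeZero n] {R : Type*} [CommRing R]
    (S : Set (Matrix (Fin n) (Fin n) R)) (hS : ∀ A ∈ S, A.IsSymm) :
    (fun A : Matrix (Fin n) (Fin n) R => A 0 0) '' QMgen S =
      QMgenR {x : R | ∃ A ∈ S, ∃ v : Fin n → R, x = v ⬝ᵥ A.mulVec v} := by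
  set G := {x : R | ∃ A ∈ S, ∃ v : Fin n → R, x = v ⬝ᵥ A.mulVec v}
  refine Set.Subset.antisymm ?_ (QMgenR_subset ((isQM_QMgen hS).isQMR_image_apply 0) ?_)
  · rintro _ ⟨A, hA, rfl⟩
    have hSQ : S ⊆ {B | B.IsSymm ∧ ∀ v, v ⬝ᵥ B *ᵥ v ∈ QMgenR G} :=
      fun B hB => ⟨hS B hB, fun v => subset_QMgenR G ⟨B, hB, v, rfl⟩⟩
    have hAQ := QMgen_subset (isQMR_QMgenR G).isQM_setOf_dotProduct_mulVec_mem hSQ hA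
    simpa only [single_dotProduct_mulVec_single] using hAQ.2 (Pi.single 0 1)
  · rintro _ ⟨A, hA, v, rfl⟩
    refine ⟨_, (isQM_QMgen hS).2.2.2 (replicateCol (Fin n) v) A (subset_QMgen S hA), ?_⟩
    simp only [transpose_replicateCol_mul_mul_replicateCol, of_apply]
end

section
/- The set Σ_n(R) of all finite sums of matrices of the form A^T A with A ∈ M_n(R) is a preordering in M_n(R); that is, it is a quadratic module and its image under the (1,1)-entry map p is closed under multiplication. -/
open Matrix

/-- `Σ_n(R)`: finite sums of matrices `Aᵀ * A`. -/
def SigmaN (n : ℕ) (R : Type*) [CommRing R] : Set (Matrix (Fin n) (Fin n) R) :=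
  (AddSubmonoid.closure {A : Matrix (Fin n) (Fin n) R |
    ∃ B : Matrix (Fin n) (Fin n) R, A = Bᵀ * B} : AddSubmonoid (Matrix (Fin n) (Fin n) R))

/-!
`Σ_n(R)` is stable under congruence because `Aᵀ (Bᵀ B) A = (B A)ᵀ (B A)`. The `(i, i)`-entry
of `Bᵀ B` is `∑ₖ B k i ^ 2`, and conversely `s ^ 2` is the `(i, i)`-entry of `Eᵀ E` for the
matrix unit `E = s • E_ii`; hence every diagonal-entry map sends `Σ_n(R)` onto the sums of
squares of `R`, which are closed under multiplication.
-/

theorem Matrix.transpose_mul_self_apply_self {m R : Type*} [Fintype m] [Mul R] [AddCommMonoid R]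
    (B : Matrix m m R) (i : m) : (Bᵀ * B) i i = ∑ k, B k i * B k i := by
  simp only [mul_apply, transpose_apply]

namespace SigmaN

variable {n : ℕ} {R : Type*} [CommRing R]

theorem transpose_mul_self_mem (B : Matrix (Fin n) (Fin n) R) : Bᵀ * B ∈ SigmaN n R :=
  AddSubmonoid.subset_closure ⟨B, rfl⟩

theorem isSymm {A : Matrix (Fin n) (Fin n) R} (hA : A ∈ SigmaN n R) : A.IsSymm := by
  induction hA using AddSubmonoid.closure_induction with
  | mem _ hB =>
    obtain ⟨B, rfl⟩ := hB
    exact isSymm_transpose_mul_self B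
  | zero => exact isSymm_zero
  | add _ _ _ _ hA hA' => exact hA.add hA'

theorem one_mem : (1 : Matrix (Fin n) (Fin n) R) ∈ SigmaN n R := by
  simpa using transpose_mul_self_mem (n := n) (R := R) 1

theorem zero_mem : (0 : Matrix (Fin n) (Fin n) R) ∈ SigmaN n R :=
  AddSubmonoid.zero_mem _

theorem add_mem {A A' : Matrix (Fin n) (Fin n) R} (hA : A ∈ SigmaN n R)
    (hA' : A' ∈ SigmaN n R) : A + A' ∈ SigmaN n R :=
  AddSubmonoid.add_mem _ hA hA'

theorem transpose_mul_mul_mem (C : Matrix (Fin n) (Fin n) R) {A : Matrix (Fin n) (Fin n) R}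
    (hA : A ∈ SigmaN n R) : Cᵀ * A * C ∈ SigmaN n R := by
  induction hA using AddSubmonoid.closure_induction with
  | mem _ hB =>
    obtain ⟨B, rfl⟩ := hB
    simpa [Matrix.mul_assoc] using transpose_mul_self_mem (B * C)
  | zero => simpa using zero_mem
  | add _ _ _ _ hA hA' => simpa [Matrix.mul_add, Matrix.add_mul] using add_mem hA hA'

theorem isQM : IsQM (SigmaN n R) :=
  ⟨fun _ => isSymm, one_mem, fun _ hA _ hA' => add_mem hA hA', fun C _ => transpose_mul_mul_mem C⟩

theorem image_apply_self_eq_isSumSq (i : Fin n) :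
    (fun A : Matrix (Fin n) (Fin n) R => A i i) '' SigmaN n R = {x | IsSumSq x} := by
  let gens := {A : Matrix (Fin n) (Fin n) R | ∃ B, A = Bᵀ * B}
  let p := entryAddMonoidHom R i i
  have hgen : p '' gens ⊆ AddSubmonoid.sumSq R := by
    rintro _ ⟨_, ⟨B, rfl⟩, rfl⟩
    simp [p, transpose_mul_self_apply_self, IsSumSq.sum_mul_self]
  have hsq : {x : R | IsSquare x} ⊆ p '' gens := by
    rintro _ ⟨s, rfl⟩
    exact ⟨_, ⟨single i i s, rfl⟩, by simp [p, transpose_single]⟩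
  have hclosure : AddSubmonoid.closure (p '' gens) = AddSubmonoid.sumSq R :=
    le_antisymm (AddSubmonoid.closure_le.2 hgen)
      (AddSubmonoid.closure_isSquare (R := R) ▸ AddSubmonoid.closure_mono hsq)
  exact congrArg SetLike.coe ((AddMonoidHom.map_mclosure p gens).trans hclosure)

end SigmaN

/-- `Σ_n(R)` is a preordering: it is a quadratic module and its image under the
(1,1)-entry map `p` is closed under multiplication. -/
theorem stmt3 (n : ℕ) [NeZero n] (R : Type*) [CommRing R] :
    IsQM (SigmaN n R) ∧
      ∀ a ∈ (fun A : Matrix (Fin n) (Fin n) R => A 0 0) '' SigmaN n R,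
        ∀ b ∈ (fun A : Matrix (Fin n) (Fin n) R => A 0 0) '' SigmaN n R,
          a * b ∈ (fun A : Matrix (Fin n) (Fin n) R => A 0 0) '' SigmaN n R := by
  refine ⟨SigmaN.isQM, ?_⟩
  simp only [SigmaN.image_apply_self_eq_isSumSq]
  exact fun _ ha _ hb => IsSumSq.mul ha hb
end

section
/- For every ideal I of a commutative unital ring R, the smallest quadratic module of M_n(R) containing I·I_n equals Σ_n(R) + S_n(I), where Σ_n(R) is the set of sums of matrices A^T A and S_n(I) is the set of symmetric matrices with all entries in I. Moreover this set is a preordering. -/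
open Matrix

/-- A preordering in `M_n(R)`: a quadratic module whose intersection with the
center `R·I_n` is closed under multiplication. -/
def IsPre {n : ℕ} {R : Type*} [CommRing R] (M : Set (Matrix (Fin n) (Fin n) R)) : Prop :=
  IsQM M ∧ ∀ r s : R, r • (1 : Matrix (Fin n) (Fin n) R) ∈ M →
    s • (1 : Matrix (Fin n) (Fin n) R) ∈ M → (r * s) • (1 : Matrix (Fin n) (Fin n) R) ∈ M

/-!
`Σ_n(R) + S_n(I)` is a quadratic module containing `I • 1`, since `S_n(I)` is stable under
`B ↦ Aᵀ * B * A`. Conversely, a quadratic module `M` containing `I • 1` contains `Σ_n(R)`, and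
for `a ∈ I` it contains `a E_ii = E_iiᵀ (a • 1) E_ii` and
`a (E_ij + E_ji) = Pᵀ (a • 1) P - a E_ii - a E_jj` with `P = E_ii + E_ij`. A symmetric `B` with
entries in `I` is `U + Uᵀ + diag B` for its strictly upper triangular part `U`, hence a sum of such
matrices. For the preordering property, `s • 1 = σ + B` gives `(r * s) • 1 = r • σ + r • B`, and
`r • σ` is a sum of matrices `Aᵀ (r • 1) A`.
-/

lemma Matrix.IsSymm.eq_upper_add_transpose_add_diagonal {ι α : Type*} [LinearOrder ι]
    [AddMonoid α] {B : Matrix ι ι α} (hB : B.IsSymm) :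
    B = of (fun i j => if i < j then B i j else 0) + (of fun i j => if i < j then B i j else 0)ᵀ +
      diagonal fun i => B i i := by
  ext i j
  rcases lt_trichotomy i j with h | rfl | h
  · simp [h, h.not_gt, h.ne]
  · simp
  · simp [h, h.not_gt, h.ne', hB.apply i j]

lemma Matrix.IsSymm.transpose_mul_mul {ι α : Type*} [Fintype ι] [CommSemiring α]
    {B : Matrix ι ι α} (hB : B.IsSymm) (A : Matrix ι ι α) : (Aᵀ * B * A).IsSymm := by
  simp [IsSymm, transpose_mul, hB.eq, Matrix.mul_assoc]

lemma Matrix.transpose_mul_mul_mem_matrix {ι α : Type*} [Fintype ι] [DecidableEq ι]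
    [CommSemiring α] {I : Ideal α} (A : Matrix ι ι α) {B : Matrix ι ι α}
    (hB : B ∈ I.matrix ι) : Aᵀ * B * A ∈ I.matrix ι := by
  have hAB : Aᵀ * B ∈ I.matrix ι := (I.matrix ι).mul_mem_left _ hB
  intro i j
  rw [mul_apply]
  exact Ideal.sum_mem _ fun k _ => I.mul_mem_right _ (hAB i k)

section

variable {n : ℕ} {R : Type*} [CommRing R]

section SigmaN

lemma transpose_mul_self_mem_sigmaN (B : Matrix (Fin n) (Fin n) R) : Bᵀ * B ∈ SigmaN n R :=
  AddSubmonoid.subset_closure ⟨B, rfl⟩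

lemma zero_mem_sigmaN : (0 : Matrix (Fin n) (Fin n) R) ∈ SigmaN n R :=
  (AddSubmonoid.closure _).zero_mem

lemma add_mem_sigmaN {a b : Matrix (Fin n) (Fin n) R} (ha : a ∈ SigmaN n R)
    (hb : b ∈ SigmaN n R) : a + b ∈ SigmaN n R :=
  (AddSubmonoid.closure _).add_mem ha hb

lemma one_mem_sigmaN : (1 : Matrix (Fin n) (Fin n) R) ∈ SigmaN n R := by
  simpa using transpose_mul_self_mem_sigmaN (1 : Matrix (Fin n) (Fin n) R)

lemma isSymm_of_mem_sigmaN {s : Matrix (Fin n) (Fin n) R} (hs : s ∈ SigmaN n R) : s.IsSymm := by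
  induction hs using AddSubmonoid.closure_induction with
  | mem x hx => obtain ⟨B, rfl⟩ := hx; exact isSymm_transpose_mul_self B
  | zero => exact isSymm_zero
  | add x y _ _ hx hy => exact hx.add hy

lemma conj_mem_sigmaN (A : Matrix (Fin n) (Fin n) R) {s : Matrix (Fin n) (Fin n) R}
    (hs : s ∈ SigmaN n R) : Aᵀ * s * A ∈ SigmaN n R := by
  induction hs using AddSubmonoid.closure_induction with
  | mem x hx =>
    obtain ⟨B, rfl⟩ := hx
    simpa [transpose_mul, Matrix.mul_assoc] using transpose_mul_self_mem_sigmaN (B * A)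
  | zero => simpa using zero_mem_sigmaN
  | add x y _ _ hx hy => simpa [Matrix.mul_add, Matrix.add_mul] using add_mem_sigmaN hx hy

end SigmaN

namespace IsQM

variable {M : Set (Matrix (Fin n) (Fin n) R)}

lemma one_mem (hM : IsQM M) : (1 : Matrix (Fin n) (Fin n) R) ∈ M := hM.2.1

lemma add_mem (hM : IsQM M) {a b : Matrix (Fin n) (Fin n) R} (ha : a ∈ M) (hb : b ∈ M) :
    a + b ∈ M :=
  hM.2.2.1 a ha b hb

lemma conj_mem (hM : IsQM M) (A : Matrix (Fin n) (Fin n) R) {m : Matrix (Fin n) (Fin n) R}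
    (hm : m ∈ M) : Aᵀ * m * A ∈ M :=
  hM.2.2.2 A m hm

lemma zero_mem (hM : IsQM M) : (0 : Matrix (Fin n) (Fin n) R) ∈ M := by
  simpa using hM.conj_mem 0 hM.one_mem

lemma sum_mem (hM : IsQM M) {α : Type*} (s : Finset α) {f : α → Matrix (Fin n) (Fin n) R}
    (h : ∀ x ∈ s, f x ∈ M) : ∑ x ∈ s, f x ∈ M :=
  Finset.sum_induction f (· ∈ M) (fun _ _ => hM.add_mem) hM.zero_mem h

lemma smul_mem_of_mem_sigmaN (hM : IsQM M) {r : R} (hr : r • (1 : Matrix (Fin n) (Fin n) R) ∈ M)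
    {s : Matrix (Fin n) (Fin n) R} (hs : s ∈ SigmaN n R) : r • s ∈ M := by
  induction hs using AddSubmonoid.closure_induction with
  | mem x hx =>
    obtain ⟨B, rfl⟩ := hx
    simpa using hM.conj_mem B hr
  | zero => simpa using hM.zero_mem
  | add x y _ _ hx hy => simpa [smul_add] using hM.add_mem hx hy

lemma sigmaN_subset (hM : IsQM M) : SigmaN n R ⊆ M := fun s hs => by
  simpa using hM.smul_mem_of_mem_sigmaN (r := 1) (by simpa using hM.one_mem) hs

section Ideal

variable {I : Ideal R} (hM : IsQM M) (hI : ∀ a ∈ I, a • (1 : Matrix (Fin n) (Fin n) R) ∈ M)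
include hM hI

lemma single_mem {a : R} (ha : a ∈ I) (i : Fin n) : single i i a ∈ M := by
  simpa using hM.conj_mem (single i i 1) (hI a ha)

lemma single_add_single_mem {a : R} (ha : a ∈ I) (i j : Fin n) :
    single i j a + single j i a ∈ M := by
  have hP : (single i i 1 + single i j 1)ᵀ * (a • 1) * (single i i 1 + single i j 1) =
      single i i a + single i j a + single j i a + single j j a := by
    simp [Matrix.add_mul, Matrix.mul_add]
    abel
  have hsum := hM.add_mem (hM.conj_mem (single i i 1 + single i j 1) (hI a ha))
    (hM.add_mem (hM.single_mem hI (I.neg_mem ha) i) (hM.single_mem hI (I.neg_mem ha) j))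
  rw [hP, ← single_neg, ← single_neg] at hsum
  convert hsum using 1
  abel

lemma add_transpose_mem {C : Matrix (Fin n) (Fin n) R} (hC : C ∈ I.matrix (Fin n)) :
    C + Cᵀ ∈ M := by
  have hdecomp : C + Cᵀ = ∑ i, ∑ j, (single i j (C i j) + single j i (C i j)) := by
    conv_lhs => rw [matrix_eq_sum_single C]
    simp [transpose_sum, Finset.sum_add_distrib]
  rw [hdecomp]
  exact hM.sum_mem _ fun i _ => hM.sum_mem _ fun j _ =>
    hM.single_add_single_mem hI (hC i j) i j

lemma diagonal_mem {d : Fin n → R} (hd : ∀ i, d i ∈ I) : diagonal d ∈ M := by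
  rw [← sum_single_eq_diagonal]
  exact hM.sum_mem _ fun i _ => hM.single_mem hI (hd i) i

lemma mem_of_isSymm {B : Matrix (Fin n) (Fin n) R} (hB : B.IsSymm)
    (hBI : B ∈ I.matrix (Fin n)) : B ∈ M := by
  rw [hB.eq_upper_add_transpose_add_diagonal]
  refine hM.add_mem (hM.add_transpose_mem hI fun i j => ?_) (hM.diagonal_mem hI fun i => hBI i i)
  dsimp only [of_apply]
  split_ifs
  exacts [hBI i j, I.zero_mem]

end Ideal

end IsQM

lemma QMgen_eq_of_forall {S T : Set (Matrix (Fin n) (Fin n) R)} (hT : IsQM T) (hST : S ⊆ T)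
    (hmin : ∀ M, IsQM M → S ⊆ M → T ⊆ M) : QMgen S = T :=
  (Set.sInter_subset_of_mem (show T ∈ {M | IsQM M ∧ S ⊆ M} from ⟨hT, hST⟩)).antisymm
    fun _ hx _ ⟨hM, hSM⟩ => hmin _ hM hSM hx

/-- `Σ_n(R) + S_n(I)`. -/
def sigmaAddSymmIdeal (I : Ideal R) : Set (Matrix (Fin n) (Fin n) R) :=
  {A | ∃ s ∈ SigmaN n R, ∃ B : Matrix (Fin n) (Fin n) R, B.IsSymm ∧ (∀ i j, B i j ∈ I) ∧ A = s + B}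

section sigmaAddSymmIdeal

variable {I : Ideal R}

lemma mem_sigmaAddSymmIdeal_of_isSymm {B : Matrix (Fin n) (Fin n) R} (hB : B.IsSymm)
    (hBI : B ∈ I.matrix (Fin n)) : B ∈ sigmaAddSymmIdeal I :=
  ⟨0, zero_mem_sigmaN, B, hB, hBI, (zero_add B).symm⟩

lemma smul_one_mem_sigmaAddSymmIdeal {a : R} (ha : a ∈ I) :
    a • (1 : Matrix (Fin n) (Fin n) R) ∈ sigmaAddSymmIdeal I :=
  mem_sigmaAddSymmIdeal_of_isSymm (isSymm_one.smul a) fun _ _ => I.mul_mem_right _ ha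

variable (I) in
lemma isQM_sigmaAddSymmIdeal : IsQM (sigmaAddSymmIdeal (n := n) I) := by
  refine ⟨?_, ⟨1, one_mem_sigmaN, 0, isSymm_zero, fun _ _ => I.zero_mem, (add_zero 1).symm⟩,
    ?_, ?_⟩
  · rintro A ⟨s, hs, B, hB, -, rfl⟩
    exact (isSymm_of_mem_sigmaN hs).add hB
  · rintro a ⟨s, hs, B, hB, hBI, rfl⟩ b ⟨s', hs', B', hB', hBI', rfl⟩
    exact ⟨s + s', add_mem_sigmaN hs hs', B + B', hB.add hB',
      fun i j => I.add_mem (hBI i j) (hBI' i j), add_add_add_comm s B s' B'⟩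
  · rintro A m ⟨s, hs, B, hB, hBI, rfl⟩
    exact ⟨Aᵀ * s * A, conj_mem_sigmaN A hs, Aᵀ * B * A, hB.transpose_mul_mul A,
      transpose_mul_mul_mem_matrix A hBI, by rw [Matrix.mul_add, Matrix.add_mul]⟩

lemma IsQM.sigmaAddSymmIdeal_subset {M : Set (Matrix (Fin n) (Fin n) R)} (hM : IsQM M)
    (hI : ∀ a ∈ I, a • (1 : Matrix (Fin n) (Fin n) R) ∈ M) : sigmaAddSymmIdeal I ⊆ M := by
  rintro _ ⟨s, hs, B, hB, hBI, rfl⟩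
  exact hM.add_mem (hM.sigmaN_subset hs) (hM.mem_of_isSymm hI hB hBI)

variable (I) in
lemma isPre_sigmaAddSymmIdeal : IsPre (sigmaAddSymmIdeal (n := n) I) := by
  refine ⟨isQM_sigmaAddSymmIdeal I, fun r t hr ⟨s, hs, B, hB, hBI, ht⟩ => ?_⟩
  rw [mul_smul, ht, smul_add]
  exact (isQM_sigmaAddSymmIdeal I).add_mem
    ((isQM_sigmaAddSymmIdeal I).smul_mem_of_mem_sigmaN hr hs)
    (mem_sigmaAddSymmIdeal_of_isSymm (hB.smul r) fun i j => I.mul_mem_left r (hBI i j))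

end sigmaAddSymmIdeal

end

theorem stmt4_general {n : ℕ} {R : Type*} [CommRing R] (I : Ideal R) :
    QMgen ((fun a : R => a • (1 : Matrix (Fin n) (Fin n) R)) '' I) =
      {A : Matrix (Fin n) (Fin n) R | ∃ s ∈ SigmaN n R, ∃ B : Matrix (Fin n) (Fin n) R,
        B.IsSymm ∧ (∀ i j, B i j ∈ I) ∧ A = s + B} ∧
    IsPre {A : Matrix (Fin n) (Fin n) R | ∃ s ∈ SigmaN n R, ∃ B : Matrix (Fin n) (Fin n) R,
        B.IsSymm ∧ (∀ i j, B i j ∈ I) ∧ A = s + B} :=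
  ⟨QMgen_eq_of_forall (isQM_sigmaAddSymmIdeal I)
      (Set.image_subset_iff.2 fun _ ha => smul_one_mem_sigmaAddSymmIdeal ha)
      fun _ hM hI => hM.sigmaAddSymmIdeal_subset fun a ha => hI ⟨a, ha, rfl⟩,
    isPre_sigmaAddSymmIdeal I⟩

theorem stmt4 {n : ℕ} [NeZero n] {R : Type*} [CommRing R] (I : Ideal R) :
    QMgen ((fun a : R => a • (1 : Matrix (Fin n) (Fin n) R)) '' I) =
      {A : Matrix (Fin n) (Fin n) R | ∃ s ∈ SigmaN n R, ∃ B : Matrix (Fin n) (Fin n) R,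
        B.IsSymm ∧ (∀ i j, B i j ∈ I) ∧ A = s + B} ∧
    IsPre {A : Matrix (Fin n) (Fin n) R | ∃ s ∈ SigmaN n R, ∃ B : Matrix (Fin n) (Fin n) R,
        B.IsSymm ∧ (∀ i j, B i j ∈ I) ∧ A = s + B} :=
  stmt4_general I
end

section
/- Let N be a quadratic module in a commutative unital ring R. Among all quadratic modules M in M_n(R) with M ∩ (R·I_n) = N·I_n, the smallest is N^n = {Σ_i n_i A_i^T A_i : n_i ∈ N, A_i ∈ M_n(R)} and the largest is ind(N) = {A symmetric : v^T A v ∈ N for all v ∈ R^n}. -/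
open Matrix

/-- `N^n = { Σᵢ nᵢ Aᵢᵀ Aᵢ : nᵢ ∈ N, Aᵢ ∈ M_n(R) }`. -/
def Npow {R : Type*} [CommRing R] (n : ℕ) (N : Set R) : Set (Matrix (Fin n) (Fin n) R) :=
  {A | ∃ (k : ℕ) (c : Fin k → R) (B : Fin k → Matrix (Fin n) (Fin n) R),
    (∀ i, c i ∈ N) ∧ A = ∑ i, c i • ((B i)ᵀ * B i)}

/-- `ind(N) = { A symmetric : vᵀ A v ∈ N for all v ∈ Rⁿ }`. -/
def indN {R : Type*} [CommRing R] (n : ℕ) (N : Set R) : Set (Matrix (Fin n) (Fin n) R) :=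
  {A | A.IsSymm ∧ ∀ v : Fin n → R, v ⬝ᵥ A.mulVec v ∈ N}

/-!
Every quadratic module `M` with `M ∩ R·Iₙ = N·Iₙ` contains `N·Iₙ`, hence all congruences
`Aᵀ (c·Iₙ) A = c AᵀA` with `c ∈ N` and their sums, i.e. `N^n ⊆ M`. Conversely, for `A ∈ M` the
congruences of `A` by the rank-one matrices `v eⱼᵀ` sum to `(vᵀ A v)·Iₙ ∈ M`, so `vᵀ A v ∈ N` and
`M ⊆ ind(N)`. That `ind(N)` is a quadratic module with scalar part `N` is direct (test with
`v = e₀`); the scalar part of `N^n` is then squeezed between `N` and that of `ind(N)`.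
-/

theorem Set.inter_range_eq_image_iff {α β : Type*} {f : α → β} (hf : Function.Injective f)
    {s : Set β} {t : Set α} : s ∩ Set.range f = f '' t ↔ f ⁻¹' s = t := by
  rw [← Set.image_preimage_eq_inter_range, (Set.image_injective.2 hf).eq_iff]

theorem Matrix.smul_one_injective {m R : Type*} [Fintype m] [DecidableEq m] [Nonempty m]
    [Semiring R] : Function.Injective fun r : R => r • (1 : Matrix m m R) := fun r s h => by
  simpa using congr_fun₂ h (Classical.arbitrary m) (Classical.arbitrary m)

theorem Matrix.dotProduct_smul_one_mulVec {m R : Type*} [Fintype m] [DecidableEq m]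
    [CommSemiring R]
    (r : R) (v : m → R) : v ⬝ᵥ (r • (1 : Matrix m m R)) *ᵥ v = ∑ i, v i ^ 2 * r := by
  simp only [smul_mulVec, one_mulVec, dotProduct, Pi.smul_apply, smul_eq_mul]
  exact Finset.sum_congr rfl fun i _ => by ring

theorem Matrix.transpose_vecMulVec_mul_mul_vecMulVec {m R : Type*} [Fintype m] [CommSemiring R]
    (A : Matrix m m R) (v w : m → R) :
    (vecMulVec v w)ᵀ * A * vecMulVec v w = (v ⬝ᵥ A *ᵥ v) • vecMulVec w w := by
  rw [transpose_vecMulVec, vecMulVec_mul, vecMulVec_mul_vecMulVec, vecMulVec_smul,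
    ← dotProduct_mulVec]

section QuadraticModule

variable {n : ℕ} {R : Type*} [CommRing R] {N : Set R} {M : Set (Matrix (Fin n) (Fin n) R)}

namespace IsQMR

def toAddSubmonoid (hN : IsQMR N) : AddSubmonoid R where
  carrier := N
  zero_mem' := by simpa using hN.2.2 0 1 hN.1
  add_mem' ha hb := hN.2.1 _ ha _ hb

theorem sum_sq_mul_mem (hN : IsQMR N) {ι : Type*} (s : Finset ι) (v : ι → R) {r : R}
    (hr : r ∈ N) : ∑ i ∈ s, v i ^ 2 * r ∈ N :=
  hN.toAddSubmonoid.sum_mem fun i _ => hN.2.2 (v i) r hr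

end IsQMR

namespace IsQM

def toAddSubmonoid (hM : IsQM M) : AddSubmonoid (Matrix (Fin n) (Fin n) R) where
  carrier := M
  zero_mem' := by simpa using hM.2.2.2 0 1 hM.2.1
  add_mem' ha hb := hM.2.2.1 _ ha _ hb

theorem smul_one_mem (hM : IsQM M) {A : Matrix (Fin n) (Fin n) R} (hA : A ∈ M)
    (v : Fin n → R) : (v ⬝ᵥ A *ᵥ v) • (1 : Matrix (Fin n) (Fin n) R) ∈ M := by
  have h : ∑ j, (vecMulVec v (Pi.single j 1))ᵀ * A * vecMulVec v (Pi.single j 1) =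
      (v ⬝ᵥ A *ᵥ v) • (1 : Matrix (Fin n) (Fin n) R) := by
    simp_rw [transpose_vecMulVec_mul_mul_vecMulVec, ← single_eq_single_vecMulVec_single,
      ← Finset.smul_sum, sum_single_one]
  exact h ▸ hM.toAddSubmonoid.sum_mem fun j _ => hM.2.2.2 _ _ hA

end IsQM

theorem isQM_indN (hN : IsQMR N) : IsQM (indN n N) := by
  refine ⟨fun A hA => hA.1, ⟨isSymm_one, fun v => ?_⟩, ?_, ?_⟩
  · simpa [dotProduct, sq] using hN.sum_sq_mul_mem Finset.univ v hN.1
  · rintro a ⟨hsa, hva⟩ b ⟨hsb, hvb⟩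
    refine ⟨hsa.add hsb, fun v => ?_⟩
    rw [add_mulVec, dotProduct_add]
    exact hN.2.1 _ (hva v) _ (hvb v)
  · rintro A m ⟨hs, hv⟩
    refine ⟨by simp [IsSymm, Matrix.transpose_mul, Matrix.mul_assoc, hs.eq], fun v => ?_⟩
    rw [← mulVec_mulVec, ← mulVec_mulVec, dotProduct_mulVec, vecMul_transpose]
    exact hv (A *ᵥ v)

theorem smul_one_mem_indN_iff [NeZero n] (hN : IsQMR N) {r : R} :
    r • (1 : Matrix (Fin n) (Fin n) R) ∈ indN n N ↔ r ∈ N := by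
  refine ⟨fun h => ?_, fun hr => ⟨by simp [IsSymm], fun v => ?_⟩⟩
  · simpa [dotProduct_smul_one_mulVec] using h.2 (Pi.single 0 1)
  · rw [dotProduct_smul_one_mulVec]
    exact hN.sum_sq_mul_mem Finset.univ v hr

theorem subset_indN (hM : IsQM M)
    (hMN : ∀ r : R, r • (1 : Matrix (Fin n) (Fin n) R) ∈ M → r ∈ N) : M ⊆ indN n N :=
  fun A hA => ⟨hM.1 A hA, fun v => hMN _ (hM.smul_one_mem hA v)⟩

theorem smul_one_mem_Npow {r : R} (hr : r ∈ N) :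
    r • (1 : Matrix (Fin n) (Fin n) R) ∈ Npow n N :=
  ⟨1, fun _ => r, fun _ => 1, fun _ => hr, by simp⟩

theorem isQM_Npow (h1 : (1 : R) ∈ N) : IsQM (Npow n N) := by
  refine ⟨?_, by simpa using smul_one_mem_Npow (n := n) h1, ?_, ?_⟩
  · rintro A ⟨k, c, B, hc, rfl⟩
    simp [IsSymm, transpose_sum, transpose_smul, Matrix.transpose_mul]
  · rintro a ⟨k, c, B, hc, rfl⟩ b ⟨k', c', B', hc', rfl⟩
    refine ⟨k + k', Fin.append c c', Fin.append B B', fun i => ?_, by simp [Fin.sum_univ_add]⟩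
    exact Fin.addCases (fun j => by simpa using hc j) (fun j => by simpa using hc' j) i
  · rintro A m ⟨k, c, B, hc, rfl⟩
    refine ⟨k, c, fun i => B i * A, hc, ?_⟩
    simp [Matrix.mul_sum, Matrix.sum_mul, Matrix.transpose_mul, Matrix.mul_assoc]

theorem Npow_subset (hM : IsQM M) (hNM : ∀ r ∈ N, r • (1 : Matrix (Fin n) (Fin n) R) ∈ M) :
    Npow n N ⊆ M := by
  rintro _ ⟨k, c, B, hc, rfl⟩
  refine hM.toAddSubmonoid.sum_mem fun i _ => (?_ : _ ∈ M)
  simpa [Matrix.mul_smul, Matrix.smul_mul] using hM.2.2.2 (B i) _ (hNM (c i) (hc i))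

theorem smul_one_mem_Npow_iff [NeZero n] (hN : IsQMR N) {r : R} :
    r • (1 : Matrix (Fin n) (Fin n) R) ∈ Npow n N ↔ r ∈ N :=
  ⟨fun h => (smul_one_mem_indN_iff hN).1 <|
      Npow_subset (isQM_indN hN) (fun _ => (smul_one_mem_indN_iff hN).2) h,
    smul_one_mem_Npow⟩

end QuadraticModule

theorem stmt7 {n : ℕ} [NeZero n] {R : Type*} [CommRing R] (N : Set R) (hN : IsQMR N) :
    IsQM (Npow n N) ∧
      (Npow n N) ∩ (Set.range fun r : R => r • (1 : Matrix (Fin n) (Fin n) R)) =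
        (fun r : R => r • (1 : Matrix (Fin n) (Fin n) R)) '' N ∧
      IsQM (indN n N) ∧
      (indN n N) ∩ (Set.range fun r : R => r • (1 : Matrix (Fin n) (Fin n) R)) =
        (fun r : R => r • (1 : Matrix (Fin n) (Fin n) R)) '' N ∧
      ∀ M : Set (Matrix (Fin n) (Fin n) R), IsQM M →
        M ∩ (Set.range fun r : R => r • (1 : Matrix (Fin n) (Fin n) R)) =
          (fun r : R => r • (1 : Matrix (Fin n) (Fin n) R)) '' N →
        Npow n N ⊆ M ∧ M ⊆ indN n N := by
  simp only [Set.inter_range_eq_image_iff smul_one_injective, Set.ext_iff, Set.mem_preimage]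
  exact ⟨isQM_Npow hN.1, fun _ => smul_one_mem_Npow_iff hN, isQM_indN hN,
    fun _ => smul_one_mem_indN_iff hN,
    fun M hM hMN => ⟨Npow_subset hM fun r => (hMN r).2, subset_indN hM fun r => (hMN r).1⟩⟩
end

section
/- For every prime quadratic module N in a commutative unital ring R, ind(N) = {A symmetric : there exists t ∈ R \ supp N with A t² ∈ N^n}, where N^n = {Σ n_i A_i^T A_i : n_i ∈ N, A_i ∈ M_n(R)}. -/
/-!
Both `ind(N)` and `N^n` are closed under congruences `A ↦ Pᵀ A P` by rectangular `P`, and `N^n`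
is the cone spanned by the rank-one matrices `c • v vᵀ` with `c ∈ N`; in particular `N^n ⊆ ind(N)`,
and primality turns `t² vᵀAv ∈ N` into `vᵀAv ∈ N`.

For the other inclusion induct on `n`. If some diagonal entry `a = A j j` lies outside `supp N`,
complete the square: with `c` the `j`-th row, `B = a² A - a c cᵀ` has zero `j`-th row and column
and `vᵀ B v = uᵀ A u` for `u = a v - (c ⬝ v) e_j`, so deleting index `j` gives a matrix in
`ind(N)` of size `n - 1`. If `s² B' ∈ N^(n-1)`, then `(s a²)² A = a² s² B + (s a)² a c cᵀ ∈ N^n`,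
and `s a² ∉ supp N` because `supp N` is prime for squares. If all diagonal entries lie in
`supp N`, testing `A` on `e_i ± e_j` puts every `2 A i j` in `supp N`, and
`4 A = ∑ 2 A i j (e_i e_jᵀ + e_j e_iᵀ)`, where
`e_i e_jᵀ + e_j e_iᵀ = (e_i + e_j)(e_i + e_j)ᵀ - e_i e_iᵀ - e_j e_jᵀ`;
here `t = 2` works, as `2 ∈ supp N` would give `-1 = -2 + 1 ∈ N`.
-/

open Matrix

/-- A prime quadratic module in `R`. -/
def IsPrimeQMR {R : Type*} [CommRing R] (N : Set R) : Prop :=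
  IsQMR N ∧ (-1 : R) ∉ N ∧ ∀ a t : R, a * t ^ 2 ∈ N → a ∈ N ∨ t ∈ N ∩ (-N)

namespace IsQMR

variable {R : Type*} [CommRing R] {N : Set R}

theorem zero_mem_s14 (hN : IsQMR N) : (0 : R) ∈ N := by
  simpa using hN.2.2 0 1 hN.1

theorem add_mem (hN : IsQMR N) {a b : R} (ha : a ∈ N) (hb : b ∈ N) : a + b ∈ N :=
  hN.2.1 a ha b hb

theorem sq_mul_mem (hN : IsQMR N) (r : R) {a : R} (ha : a ∈ N) : r ^ 2 * a ∈ N :=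
  hN.2.2 r a ha

end IsQMR

namespace IsPrimeQMR

variable {R : Type*} [CommRing R] {N : Set R}

theorem mem_of_mul_sq_mem (hN : IsPrimeQMR N) {a t : R} (h : a * t ^ 2 ∈ N)
    (ht : t ∉ N ∩ -N) : a ∈ N :=
  (hN.2.2 a t h).resolve_right ht

theorem mem_supp_or_mem_supp_of_mul_sq_mem_supp (hN : IsPrimeQMR N) {a t : R}
    (h : a * t ^ 2 ∈ N ∩ -N) : a ∈ N ∩ -N ∨ t ∈ N ∩ -N := by
  by_contra! ⟨ha, ht⟩
  have hneg : -a * t ^ 2 ∈ N := by simpa using h.2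
  exact ha ⟨hN.mem_of_mul_sq_mem h.1 ht, by simpa using hN.mem_of_mul_sq_mem hneg ht⟩

theorem two_not_mem_supp (hN : IsPrimeQMR N) : (2 : R) ∉ N ∩ -N := fun h2 ↦
  hN.2.1 <| by convert hN.1.add_mem (Set.mem_neg.mp h2.2) hN.1.1 using 1; norm_num

end IsPrimeQMR

theorem Matrix.transpose_mul_self_eq_sum_vecMulVec {m n α : Type*} [Fintype m]
    [NonUnitalNonAssocSemiring α] (B : Matrix m n α) : Bᵀ * B = ∑ k, vecMulVec (B k) (B k) := by
  ext i j
  simp [mul_apply, sum_apply, vecMulVec_apply]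

section Npow

variable {R : Type*} [CommRing R] {N : Set R} {n : ℕ}

theorem zero_mem_Npow : (0 : Matrix (Fin n) (Fin n) R) ∈ Npow n N :=
  ⟨0, Fin.elim0, Fin.elim0, fun i ↦ i.elim0, by simp⟩

theorem add_mem_Npow {X Y : Matrix (Fin n) (Fin n) R} (hX : X ∈ Npow n N) (hY : Y ∈ Npow n N) :
    X + Y ∈ Npow n N := by
  obtain ⟨k, c, B, hc, rfl⟩ := hX
  obtain ⟨l, d, C, hd, rfl⟩ := hY
  refine ⟨k + l, Fin.append c d, Fin.append B C, Fin.addCases (by simpa) (by simpa), ?_⟩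
  simp [Fin.sum_univ_add]

theorem sum_mem_Npow {ι : Type*} (s : Finset ι) {X : ι → Matrix (Fin n) (Fin n) R}
    (hX : ∀ i ∈ s, X i ∈ Npow n N) : ∑ i ∈ s, X i ∈ Npow n N :=
  Finset.sum_induction X (· ∈ Npow n N) (fun _ _ ↦ add_mem_Npow) zero_mem_Npow hX

theorem smul_vecMulVec_mem_Npow {c : R} (hc : c ∈ N) (v : Fin n → R) :
    c • vecMulVec v v ∈ Npow n N := by
  cases n with
  | zero =>
    rw [Subsingleton.elim (c • vecMulVec v v) 0]
    exact zero_mem_Npow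
  | succ n =>
    refine ⟨1, ![c], ![vecMulVec (Pi.single 0 1) v], fun _ ↦ by simpa, ?_⟩
    simp [transpose_vecMulVec, vecMulVec_mul_vecMulVec]

@[elab_as_elim]
theorem Npow_induction {motive : Matrix (Fin n) (Fin n) R → Prop} (zero : motive 0)
    (add : ∀ X Y, motive X → motive Y → motive (X + Y))
    (smul_vecMulVec : ∀ c ∈ N, ∀ v, motive (c • vecMulVec v v))
    {X : Matrix (Fin n) (Fin n) R} (hX : X ∈ Npow n N) : motive X := by
  obtain ⟨k, c, B, hc, rfl⟩ := hX
  refine Finset.sum_induction _ motive add zero fun i _ ↦ ?_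
  rw [transpose_mul_self_eq_sum_vecMulVec, Finset.smul_sum]
  exact Finset.sum_induction _ motive add zero fun k _ ↦ smul_vecMulVec _ (hc i) _

end Npow

section Congruence

variable {R : Type*} [CommRing R] {N : Set R} {m n : ℕ}

theorem transpose_mul_mul_mem_Npow (P : Matrix (Fin m) (Fin n) R) {X : Matrix (Fin m) (Fin m) R}
    (hX : X ∈ Npow m N) : Pᵀ * X * P ∈ Npow n N := by
  refine Npow_induction ?_ (fun X Y hX hY ↦ ?_) (fun c hc v ↦ ?_) hX
  · simpa using zero_mem_Npow
  · simpa [Matrix.mul_add, Matrix.add_mul] using add_mem_Npow hX hY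
  · rw [Matrix.mul_smul, Matrix.smul_mul, mul_vecMulVec, vecMulVec_mul, mulVec_transpose]
    exact smul_vecMulVec_mem_Npow hc _

theorem sq_smul_mem_Npow (r : R) {X : Matrix (Fin n) (Fin n) R} (hX : X ∈ Npow n N) :
    r ^ 2 • X ∈ Npow n N := by
  simpa [sq, mul_smul] using transpose_mul_mul_mem_Npow (r • 1 : Matrix (Fin n) (Fin n) R) hX

theorem transpose_mul_mul_mem_indN (P : Matrix (Fin m) (Fin n) R) {A : Matrix (Fin m) (Fin m) R}
    (hA : A ∈ indN m N) : Pᵀ * A * P ∈ indN n N := by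
  refine ⟨?_, fun v ↦ ?_⟩
  · simp [IsSymm, Matrix.transpose_mul, hA.1.eq, Matrix.mul_assoc]
  · rw [← mulVec_mulVec, ← mulVec_mulVec, dotProduct_mulVec, vecMul_transpose]
    exact hA.2 _

theorem Npow_subset_indN (hN : IsQMR N) : Npow n N ⊆ indN n N := by
  intro X hX
  refine Npow_induction ?_ (fun X Y hX hY ↦ ?_) (fun c hc v ↦ ?_) hX
  · simpa [indN, isSymm_zero] using hN.zero_mem_s14
  · refine ⟨hX.1.add hY.1, fun w ↦ ?_⟩
    rw [add_mulVec, dotProduct_add]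
    exact hN.add_mem (hX.2 w) (hY.2 w)
  · refine ⟨?_, fun w ↦ ?_⟩
    · simp [IsSymm, transpose_vecMulVec]
    · have hq : w ⬝ᵥ (c • vecMulVec v v) *ᵥ w = (v ⬝ᵥ w) ^ 2 * c := by
        simp only [smul_mulVec, vecMulVec_mulVec, op_smul_eq_smul, dotProduct_smul,
          dotProduct_comm w v, smul_eq_mul]
        ring
      exact hq ▸ hN.sq_mul_mem _ hc

end Congruence

section SuccAboveProj

variable (R : Type*) [CommRing R] {m : ℕ}

def succAboveProj (j : Fin (m + 1)) : Matrix (Fin m) (Fin (m + 1)) R :=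
  (1 : Matrix (Fin (m + 1)) (Fin (m + 1)) R).submatrix j.succAbove id

variable {R}

theorem succAboveProj_mul_mul_transpose (j : Fin (m + 1))
    (X : Matrix (Fin (m + 1)) (Fin (m + 1)) R) :
    succAboveProj R j * X * (succAboveProj R j)ᵀ = X.submatrix j.succAbove j.succAbove := by
  ext k l
  simp [succAboveProj, mul_apply, one_apply]

theorem transpose_succAboveProj_mul_submatrix_mul {j : Fin (m + 1)}
    {X : Matrix (Fin (m + 1)) (Fin (m + 1)) R} (hrow : ∀ l, X j l = 0) (hcol : ∀ i, X i j = 0) :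
    (succAboveProj R j)ᵀ * X.submatrix j.succAbove j.succAbove * succAboveProj R j = X := by
  ext i l
  induction i using Fin.succAboveCases j with
  | x => simp [succAboveProj, mul_apply, one_apply, hrow]
  | p k =>
    induction l using Fin.succAboveCases j with
    | x => simp [succAboveProj, mul_apply, one_apply, hcol]
    | p l => simp [succAboveProj, mul_apply, one_apply]

end SuccAboveProj

section Pivot

variable {R : Type*} [CommRing R] {n : ℕ}

def pivotMatrix (A : Matrix (Fin n) (Fin n) R) (j : Fin n) : Matrix (Fin n) (Fin n) R :=
  A j j ^ 2 • A - A j j • vecMulVec (A j) (A j)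

theorem pivotMatrix_apply_left (A : Matrix (Fin n) (Fin n) R) (j l : Fin n) :
    pivotMatrix A j j l = 0 := by
  simp only [pivotMatrix, Matrix.sub_apply, Matrix.smul_apply, smul_eq_mul, vecMulVec_apply]
  ring

theorem pivotMatrix_apply_right {A : Matrix (Fin n) (Fin n) R} (hA : A.IsSymm) (i j : Fin n) :
    pivotMatrix A j i j = 0 := by
  simp only [pivotMatrix, Matrix.sub_apply, Matrix.smul_apply, smul_eq_mul, vecMulVec_apply,
    hA.apply]
  ring

theorem isSymm_pivotMatrix {A : Matrix (Fin n) (Fin n) R} (hA : A.IsSymm) (j : Fin n) :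
    (pivotMatrix A j).IsSymm :=
  (hA.smul _).sub ((IsSymm.ext fun _ _ ↦ mul_comm _ _).smul _)

theorem dotProduct_pivotMatrix_mulVec {A : Matrix (Fin n) (Fin n) R} (hA : A.IsSymm) (j : Fin n)
    (v : Fin n → R) :
    v ⬝ᵥ pivotMatrix A j *ᵥ v =
      (A j j • v - (A j ⬝ᵥ v) • Pi.single j 1) ⬝ᵥ
        A *ᵥ (A j j • v - (A j ⬝ᵥ v) • Pi.single j 1) := by
  have hcol : v ⬝ᵥ A *ᵥ Pi.single j 1 = A j ⬝ᵥ v := by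
    simp [mulVec_single, dotProduct, hA.apply, mul_comm]
  simp only [pivotMatrix, sub_mulVec, smul_mulVec, vecMulVec_mulVec, mulVec_sub, mulVec_smul,
    dotProduct_sub, sub_dotProduct, dotProduct_smul, smul_dotProduct, hcol, single_dotProduct]
  simp only [smul_eq_mul, dotProduct_comm v (A j), MulOpposite.smul_eq_mul_unop,
    MulOpposite.unop_op, mulVec, one_mul, dotProduct_single, mul_one]
  ring

end Pivot

section Main

variable {R : Type*} [CommRing R] {N : Set R} {n : ℕ}

theorem pivotMatrix_mem_indN {A : Matrix (Fin n) (Fin n) R} (hA : A ∈ indN n N) (j : Fin n) :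
    pivotMatrix A j ∈ indN n N :=
  ⟨isSymm_pivotMatrix hA.1 j, fun v ↦ dotProduct_pivotMatrix_mulVec hA.1 j v ▸ hA.2 _⟩

theorem dotProduct_single_add_single_mulVec {A : Matrix (Fin n) (Fin n) R} (hA : A.IsSymm)
    (i j : Fin n) (x y : R) :
    (Pi.single i x + Pi.single j y) ⬝ᵥ A *ᵥ (Pi.single i x + Pi.single j y) =
      x ^ 2 * A i i + 2 * x * y * A i j + y ^ 2 * A j j := by
  simp only [mulVec_add, mulVec_single, op_smul_eq_smul, dotProduct_add, dotProduct_smul,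
    add_dotProduct, single_dotProduct, col_apply, hA.apply i j, smul_eq_mul]
  ring

theorem two_mul_mem_supp_of_diag_mem_supp (hN : IsQMR N) {A : Matrix (Fin n) (Fin n) R}
    (hA : A ∈ indN n N) (hdiag : ∀ i, A i i ∈ N ∩ -N) (i j : Fin n) :
    2 * A i j ∈ N ∩ -N := by
  have hq (y : R) (hy : y ^ 2 = 1) : A i i + 2 * y * A i j + A j j ∈ N := by
    have h := hA.2 (Pi.single i 1 + Pi.single j y)
    rwa [dotProduct_single_add_single_mulVec hA.1, hy, one_pow, one_mul, one_mul, mul_one] at h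
  have hcancel (y : R) (hy : y ^ 2 = 1) : 2 * y * A i j ∈ N := by
    convert hN.add_mem (hN.add_mem (hq y hy) (hdiag i).2) (hdiag j).2 using 1
    ring
  exact ⟨by simpa using hcancel 1 (one_pow 2), by simpa using hcancel (-1) (by ring)⟩

theorem smul_vecMulVec_add_vecMulVec_mem_Npow {c : R} (hc : c ∈ N ∩ -N) (v w : Fin n → R) :
    c • (vecMulVec v w + vecMulVec w v) ∈ Npow n N := by
  have h : c • (vecMulVec v w + vecMulVec w v) =
      c • vecMulVec (v + w) (v + w) + ((-c) • vecMulVec v v + (-c) • vecMulVec w w) := by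
    ext
    simp only [Matrix.smul_apply, Matrix.add_apply, vecMulVec_apply, smul_eq_mul, neg_smul,
      Pi.add_apply, Matrix.neg_apply]
    ring
  have hc' : -c ∈ N := Set.mem_neg.mp hc.2
  rw [h]
  exact add_mem_Npow (smul_vecMulVec_mem_Npow hc.1 _)
    (add_mem_Npow (smul_vecMulVec_mem_Npow hc' _) (smul_vecMulVec_mem_Npow hc' _))

theorem two_sq_smul_mem_Npow_of_diag_mem_supp (hN : IsQMR N) {A : Matrix (Fin n) (Fin n) R}
    (hA : A ∈ indN n N) (hdiag : ∀ i, A i i ∈ N ∩ -N) : (2 : R) ^ 2 • A ∈ Npow n N := by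
  have h : (2 : R) ^ 2 • A = ∑ i, ∑ j, (2 * A i j) •
      (vecMulVec (Pi.single i 1) (Pi.single j 1) + vecMulVec (Pi.single j 1) (Pi.single i 1)) := by
    ext k l
    simp only [Matrix.smul_apply, smul_eq_mul, smul_add, Finset.sum_add_distrib,
      Matrix.sum_apply, Matrix.add_apply, vecMulVec_apply, Pi.single_apply, mul_ite, mul_one,
      mul_zero, Finset.sum_ite_eq, Finset.mem_univ, if_true, Finset.sum_ite_irrel,
      Finset.sum_const_zero]
    rw [hA.1.apply l k]
    ring
  rw [h]
  exact sum_mem_Npow _ fun i _ ↦ sum_mem_Npow _ fun j _ ↦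
    smul_vecMulVec_add_vecMulVec_mem_Npow (two_mul_mem_supp_of_diag_mem_supp hN hA hdiag i j) _ _

theorem exists_sq_smul_mem_Npow_of_diag_not_mem_supp (hN : IsPrimeQMR N) {m : ℕ}
    (ih : ∀ B ∈ indN m N, ∃ t ∉ N ∩ -N, t ^ 2 • B ∈ Npow m N)
    {A : Matrix (Fin (m + 1)) (Fin (m + 1)) R} (hA : A ∈ indN (m + 1) N) {j : Fin (m + 1)}
    (hj : A j j ∉ N ∩ -N) : ∃ t ∉ N ∩ -N, t ^ 2 • A ∈ Npow (m + 1) N := by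
  set a := A j j
  have ha : a ∈ N := by simpa [mulVec_single] using hA.2 (Pi.single j 1)
  have hB : (pivotMatrix A j).submatrix j.succAbove j.succAbove ∈ indN m N := by
    rw [← succAboveProj_mul_mul_transpose]
    simpa using transpose_mul_mul_mem_indN (succAboveProj R j)ᵀ (pivotMatrix_mem_indN hA j)
  obtain ⟨s, hs, hsB⟩ := ih _ hB
  have hsA : s ^ 2 • pivotMatrix A j ∈ Npow (m + 1) N := by
    rw [← transpose_succAboveProj_mul_submatrix_mul (pivotMatrix_apply_left A j)
      (fun i ↦ pivotMatrix_apply_right hA.1 i j), ← Matrix.smul_mul, ← Matrix.mul_smul]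
    exact transpose_mul_mul_mem_Npow _ hsB
  have hdecomp : (s * a ^ 2) ^ 2 • A =
      a ^ 2 • s ^ 2 • pivotMatrix A j + ((s * a) ^ 2 * a) • vecMulVec (A j) (A j) := by
    ext
    simp only [Matrix.smul_apply, smul_eq_mul, pivotMatrix, Matrix.add_apply, Matrix.sub_apply]
    ring
  refine ⟨s * a ^ 2, fun h ↦ ?_, ?_⟩
  · rcases hN.mem_supp_or_mem_supp_of_mul_sq_mem_supp h with h | h
    exacts [hs h, hj h]
  · rw [hdecomp]
    exact add_mem_Npow (sq_smul_mem_Npow a hsA)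
      (smul_vecMulVec_mem_Npow (hN.1.sq_mul_mem _ ha) _)

theorem exists_sq_smul_mem_Npow_of_mem_indN (hN : IsPrimeQMR N) {A : Matrix (Fin n) (Fin n) R}
    (hA : A ∈ indN n N) : ∃ t ∉ N ∩ -N, t ^ 2 • A ∈ Npow n N := by
  induction n with
  | zero =>
    exact ⟨2, hN.two_not_mem_supp, two_sq_smul_mem_Npow_of_diag_mem_supp hN.1 hA finZeroElim⟩
  | succ m ih =>
    by_cases hdiag : ∀ i, A i i ∈ N ∩ -N
    · exact ⟨2, hN.two_not_mem_supp, two_sq_smul_mem_Npow_of_diag_mem_supp hN.1 hA hdiag⟩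
    · obtain ⟨j, hj⟩ := not_forall.mp hdiag
      exact exists_sq_smul_mem_Npow_of_diag_not_mem_supp hN (fun B hB ↦ ih hB) hA hj

theorem mem_indN_of_sq_smul_mem_Npow (hN : IsPrimeQMR N) {A : Matrix (Fin n) (Fin n) R}
    (hA : A.IsSymm) {t : R} (ht : t ∉ N ∩ -N) (htA : t ^ 2 • A ∈ Npow n N) : A ∈ indN n N := by
  refine ⟨hA, fun v ↦ hN.mem_of_mul_sq_mem ?_ ht⟩
  simpa [smul_mulVec, mul_comm] using (Npow_subset_indN hN.1 htA).2 v

end Main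

theorem stmt14_general {n : ℕ} {R : Type*} [CommRing R] (N : Set R) (hN : IsPrimeQMR N) :
    indN n N = {A : Matrix (Fin n) (Fin n) R | A.IsSymm ∧
      ∃ t : R, t ∉ N ∩ (-N) ∧ t ^ 2 • A ∈ Npow n N} := by
  ext A
  exact ⟨fun hA ↦ ⟨hA.1, exists_sq_smul_mem_Npow_of_mem_indN hN hA⟩,
    fun ⟨hA, t, ht, htA⟩ ↦ mem_indN_of_sq_smul_mem_Npow hN hA ht htA⟩

theorem stmt14 {n : ℕ} [NeZero n] {R : Type*} [CommRing R] (N : Set R) (hN : IsPrimeQMR N) :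
    indN n N = {A : Matrix (Fin n) (Fin n) R | A.IsSymm ∧
      ∃ t : R, t ∉ N ∩ (-N) ∧ t ^ 2 • A ∈ Npow n N} :=
  stmt14_general N hN
end

section
/- For every real closed field κ and every ring homomorphism φ : R → κ, the set of symmetric n×n matrices A over R such that φ applied entrywise to A gives a positive semidefinite matrix over κ equals ind(φ⁻¹(Σκ²)), i.e., equals {A symmetric : v^T A v ∈ φ⁻¹(κ²) for all v ∈ R^n}, where κ² denotes the (unique) ordering of κ consisting of squares. -/
open Matrix Polynomial

/-- A real closed field: a linear ordered field in which every nonnegative element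
is a square and every polynomial of odd degree has a root. -/
def IsRealClosedField (κ : Type*) [Field κ] [LinearOrder κ] [IsStrictOrderedRing κ] : Prop :=
  (∀ x : κ, 0 ≤ x → ∃ y : κ, x = y ^ 2) ∧
  ∀ p : Polynomial κ, Odd p.natDegree → ∃ x : κ, p.eval x = 0

/-!
Nonnegative elements of a real closed field are squares, which gives one inclusion. For the other,
let `S ⊆ κ` be the subfield generated by `φ(R)`. Clearing denominators shows that the quadratic form
of `φ(A)` is nonnegative on `Sⁿ`. Since `S` need not be dense in `κ`, this is transferred to `κⁿ` by
diagonalizing over `S`: `φ(A) = Mᵀ diag(d) M` with `M` surjective, so each `dᵢ` is a value of the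
form on `Sⁿ`, hence `dᵢ ≥ 0`, and the identity shows `φ(A)` is positive semidefinite over `κ`.
-/

open QuadraticMap

section Quadratic

variable {n : Type*} [Fintype n]

theorem RingHom.map_dotProduct_mulVec {R S : Type*} [CommRing R] [CommRing S] (f : R →+* S)
    (A : Matrix n n R) (v : n → R) :
    f (v ⬝ᵥ A *ᵥ v) = (f ∘ v) ⬝ᵥ A.map f *ᵥ (f ∘ v) := by
  rw [RingHom.map_dotProduct]
  congr 1
  funext i
  exact f.map_mulVec A v i

theorem Matrix.dotProduct_transpose_mul_diagonal_mul_mulVec {m K : Type*} [Fintype m]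
    [DecidableEq m] [CommRing K] (M : Matrix m n K) (d : m → K) (x : n → K) :
    x ⬝ᵥ (Mᵀ * diagonal d * M) *ᵥ x = ∑ i, d i * (M *ᵥ x) i ^ 2 := by
  rw [← mulVec_mulVec, ← mulVec_mulVec, dotProduct_mulVec, vecMul_transpose]
  simp only [dotProduct, mulVec_diagonal]
  exact Finset.sum_congr rfl fun i _ => by ring

variable [DecidableEq n] {K : Type*} [Field K]

theorem QuadraticMap.weightedSumSquares_eq_toQuadraticForm'_diagonal (w : n → K) :
    weightedSumSquares K w = (diagonal w).toQuadraticForm' := by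
  ext x
  simp [weightedSumSquares_apply, toQuadraticForm', toLinearMap₂'_apply', mulVec_diagonal,
    dotProduct, mul_left_comm]

variable [Invertible (2 : K)]

theorem Matrix.IsSymm.toMatrix'_toQuadraticForm' {B : Matrix n n K} (hB : B.IsSymm) :
    B.toQuadraticForm'.toMatrix' = B := by
  have hsymm : ∀ x y, toLinearMap₂' K B x y = toLinearMap₂' K B y x := fun x y => by
    rw [toLinearMap₂'_apply', toLinearMap₂'_apply', dotProduct_mulVec, ← mulVec_transpose, hB,
      dotProduct_comm]
  rw [QuadraticForm.toMatrix', toQuadraticForm', associated, associated_left_inverse K hsymm,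
    LinearMap.toMatrix'_toLinearMap₂']

theorem Matrix.IsSymm.exists_eq_transpose_mul_diagonal_mul {B : Matrix n n K} (hB : B.IsSymm) :
    ∃ (m : ℕ) (d : Fin m → K) (M : Matrix (Fin m) n K),
      Function.Surjective M.mulVec ∧ B = Mᵀ * diagonal d * M := by
  obtain ⟨d, ⟨e⟩⟩ := B.toQuadraticForm'.equivalent_weightedSumSquares
  obtain ⟨e, hcomp⟩ : ∃ e : (n → K) ≃ₗ[K] _,
      B.toQuadraticForm' = (weightedSumSquares K d).comp e.toLinearMap :=
    ⟨e.toLinearEquiv, QuadraticMap.ext fun x => (e.map_app x).symm⟩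
  refine ⟨_, d, LinearMap.toMatrix' e.toLinearMap, ?_, ?_⟩
  · rw [show (LinearMap.toMatrix' e.toLinearMap).mulVec = e from
      funext (LinearMap.toMatrix'_mulVec _)]
    exact e.surjective
  · calc B = B.toQuadraticForm'.toMatrix' := hB.toMatrix'_toQuadraticForm'.symm
      _ = _ := by
        rw [hcomp, QuadraticForm.toMatrix', associated_comp, LinearMap.toMatrix₂'_compl₁₂,
          ← QuadraticForm.toMatrix', weightedSumSquares_eq_toQuadraticForm'_diagonal,
          (isSymm_diagonal d).toMatrix'_toQuadraticForm']

end Quadratic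

theorem Matrix.IsSymm.dotProduct_map_mulVec_nonneg {n K L : Type*} [Fintype n] [DecidableEq n]
    [Field K] [Field L] [LinearOrder L] [IsStrictOrderedRing L] (f : K →+* L)
    {B : Matrix n n K} (hB : B.IsSymm) (h : ∀ x, 0 ≤ f (x ⬝ᵥ B *ᵥ x)) (w : n → L) :
    0 ≤ w ⬝ᵥ B.map f *ᵥ w := by
  let _ : Invertible (2 : K) :=
    invertibleOfNonzero fun h2 => two_ne_zero (by rw [← map_ofNat f 2, h2, map_zero] : (2 : L) = 0)
  obtain ⟨m, d, M, hM, rfl⟩ := hB.exists_eq_transpose_mul_diagonal_mul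
  have hd : ∀ i, 0 ≤ f (d i) := fun i => by
    obtain ⟨x, hx⟩ := hM (Pi.single i 1)
    simpa [dotProduct_transpose_mul_diagonal_mul_mulVec, hx, Pi.single_apply] using h x
  rw [Matrix.map_mul, Matrix.map_mul, transpose_map, diagonal_map f.map_zero,
    dotProduct_transpose_mul_diagonal_mul_mulVec]
  exact Finset.sum_nonneg fun i _ => mul_nonneg (hd i) (sq_nonneg _)

theorem RingHom.exists_eq_div_of_mem_closure_range {R K : Type*} [CommRing R] [Field K]
    (φ : R →+* K) {x : K} (hx : x ∈ Subfield.closure (Set.range φ)) :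
    ∃ a b, φ b ≠ 0 ∧ x = φ a / φ b := by
  have hclosure : Subring.closure (Set.range φ) = φ.range := by
    rw [← RingHom.coe_range, Subring.closure_eq]
  obtain ⟨a, b, rfl⟩ := by simpa [Subfield.mem_closure_iff, hclosure] using hx
  rcases eq_or_ne (φ b) 0 with hb | hb
  · exact ⟨0, 1, by simp, by simp [hb]⟩
  · exact ⟨a, b, hb, rfl⟩

theorem RingHom.exists_comp_eq_smul_of_mem_closure_range {ι R K : Type*} [Fintype ι]
    [CommRing R] [Field K] (φ : R →+* K) (x : ι → Subfield.closure (Set.range φ)) :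
    ∃ (c : R) (v : ι → R),
      φ c ≠ 0 ∧ φ ∘ v = φ c • ((Subfield.closure (Set.range φ)).subtype ∘ x) := by
  classical
  choose a b hb hx using fun i => φ.exists_eq_div_of_mem_closure_range (x i).2
  refine ⟨∏ i, b i, fun i => a i * ∏ j ∈ Finset.univ.erase i, b j, ?_, funext fun i => ?_⟩
  · simpa [map_prod] using Finset.prod_ne_zero_iff.mpr fun i _ => hb i
  · simp only [Function.comp_apply, Pi.smul_apply, smul_eq_mul, map_mul, map_prod,
      Subfield.coe_subtype, hx i,
      ← Finset.mul_prod_erase Finset.univ (fun j => φ (b j)) (Finset.mem_univ i)]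
    field_simp [hb i]

theorem stmt15_general {n : ℕ} {R : Type*} [CommRing R]
    (κ : Type*) [Field κ] [LinearOrder κ] [IsStrictOrderedRing κ] (hκ : IsRealClosedField κ) (φ : R →+* κ) :
    {A : Matrix (Fin n) (Fin n) R | A.IsSymm ∧
        ∀ w : Fin n → κ, 0 ≤ w ⬝ᵥ (A.map φ).mulVec w} =
      {A : Matrix (Fin n) (Fin n) R | A.IsSymm ∧
        ∀ v : Fin n → R, φ (v ⬝ᵥ A.mulVec v) ∈ {x : κ | ∃ y : κ, x = y ^ 2}} := by
  ext A
  refine and_congr_right fun hA => ⟨fun h v => hκ.1 _ ?_, fun h => ?_⟩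
  · rw [φ.map_dotProduct_mulVec]
    exact h _
  set S := Subfield.closure (Set.range φ)
  let ψ : R →+* S := φ.codRestrict S fun r => Subfield.subset_closure ⟨r, rfl⟩
  have hψ : (A.map ψ).map S.subtype = A.map φ := rfl
  rw [← hψ]
  refine (hA.map ψ).dotProduct_map_mulVec_nonneg S.subtype fun x => ?_
  obtain ⟨c, v, hc, hv⟩ := φ.exists_comp_eq_smul_of_mem_closure_range x
  obtain ⟨y, hy⟩ := h v
  have hscale : φ (v ⬝ᵥ A *ᵥ v) = φ c ^ 2 * S.subtype (x ⬝ᵥ A.map ψ *ᵥ x) := by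
    rw [φ.map_dotProduct_mulVec, S.subtype.map_dotProduct_mulVec, hψ, hv, smul_dotProduct,
      mulVec_smul, dotProduct_smul, smul_eq_mul, smul_eq_mul]
    ring
  refine nonneg_of_mul_nonneg_right ?_ (sq_pos_of_ne_zero hc)
  rw [← hscale, hy]
  exact sq_nonneg y

theorem stmt15 {n : ℕ} [NeZero n] {R : Type*} [CommRing R]
    (κ : Type*) [Field κ] [LinearOrder κ] [IsStrictOrderedRing κ] (hκ : IsRealClosedField κ) (φ : R →+* κ) :
    {A : Matrix (Fin n) (Fin n) R | A.IsSymm ∧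
        ∀ w : Fin n → κ, 0 ≤ w ⬝ᵥ (A.map φ).mulVec w} =
      {A : Matrix (Fin n) (Fin n) R | A.IsSymm ∧
        ∀ v : Fin n → R, φ (v ⬝ᵥ A.mulVec v) ∈ {x : κ | ∃ y : κ, x = y ^ 2}} :=
  stmt15_general κ hκ φ
end

section
/- Let R = ℝ[x], S = {x³·I_2} and F = diag(x, 1) ∈ M_2(ℝ[x]). Although F(x) is positive semidefinite for all x ≥ 0, there is no central element b ∈ T_S (the preordering of ℝ[x] generated by x³) and no k ∈ ℕ and C ∈ T_S^2 such that F·b = F^{2k} + C. -/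
open Matrix Polynomial

/-- The smallest preordering of `M_n(R)` containing `S`. -/
def TSgen {n : ℕ} {R : Type*} [CommRing R] (S : Set (Matrix (Fin n) (Fin n) R)) :
    Set (Matrix (Fin n) (Fin n) R) :=
  ⋂₀ {T | IsPre T ∧ S ⊆ T}

/-- Sums of squares in `ℝ[x]`. -/
def sumSq : Set (Polynomial ℝ) :=
  (AddSubmonoid.closure {p : Polynomial ℝ | ∃ q : Polynomial ℝ, p = q ^ 2} :
    AddSubmonoid (Polynomial ℝ))

/-- The preordering of `ℝ[x]` generated by `x³`: `{u + x³ v : u, v sums of squares}`. -/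
def TSx : Set (Polynomial ℝ) :=
  {p | ∃ u ∈ sumSq, ∃ v ∈ sumSq, p = u + (Polynomial.X : Polynomial ℝ) ^ 3 * v}

/-- The matrix `F = diag(x, 1)` over `ℝ[x]`. -/
noncomputable def Fmat : Matrix (Fin 2) (Fin 2) (Polynomial ℝ) :=
  Matrix.diagonal ![Polynomial.X, 1]

/-! Every preordering `P` of a commutative ring `R` induces a preordering of `M_n(R)`: the symmetric
matrices whose quadratic forms `vᵀ C v` lie in `P`. Taking for `P` the polynomials that are
nonnegative to first order at `0`, which contain `x³`, the smallest preordering generated by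
`x³ I₂` sits inside it, so the diagonal entries `bx - x^{2k}` and `b - 1` of `C` both lie in `P`.
The second forces `b(0) ≥ 1`; the first then fails at `0`, since for `k ≥ 1` its constant term
vanishes while its linear coefficient is `b(0)`. -/

namespace RingPreordering

variable {R : Type*} [CommRing R]

def matrixForms (P : RingPreordering R) (ι : Type*) [Fintype ι] : Set (Matrix ι ι R) :=
  {C | C.IsSymm ∧ ∀ v : ι → R, v ⬝ᵥ C *ᵥ v ∈ P}

variable {P : RingPreordering R} {ι : Type*} [Fintype ι]

theorem dotProduct_self_mem (v : ι → R) : v ⬝ᵥ v ∈ P :=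
  P.mem_of_isSumSq (IsSumSq.sum_mul_self _ v)

theorem diag_mem_of_mem_matrixForms [DecidableEq ι] {C : Matrix ι ι R}
    (hC : C ∈ P.matrixForms ι) (i : ι) : C i i ∈ P := by
  simpa using hC.2 (Pi.single i 1)

theorem smul_one_mem_matrixForms [DecidableEq ι] {r : R} (hr : r ∈ P) :
    r • (1 : Matrix ι ι R) ∈ P.matrixForms ι := by
  refine ⟨by simp [IsSymm], fun v => ?_⟩
  rw [smul_mulVec, one_mulVec, dotProduct_smul, smul_eq_mul]
  exact mul_mem hr (dotProduct_self_mem v)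

theorem add_mem_matrixForms {A B : Matrix ι ι R} (hA : A ∈ P.matrixForms ι)
    (hB : B ∈ P.matrixForms ι) : A + B ∈ P.matrixForms ι :=
  ⟨hA.1.add hB.1, fun v => by rw [add_mulVec, dotProduct_add]; exact add_mem (hA.2 v) (hB.2 v)⟩

theorem transpose_mul_mul_mem_matrixForms (A : Matrix ι ι R) {C : Matrix ι ι R}
    (hC : C ∈ P.matrixForms ι) : Aᵀ * C * A ∈ P.matrixForms ι := by
  refine ⟨?_, fun v => ?_⟩
  · rw [IsSymm, transpose_mul, transpose_mul, transpose_transpose, hC.1.eq, Matrix.mul_assoc]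
  · rw [← mulVec_mulVec, ← mulVec_mulVec, dotProduct_mulVec, vecMul_transpose]
    exact hC.2 (A *ᵥ v)

theorem isPre_matrixForms (n : ℕ) : IsPre (P.matrixForms (Fin n)) := by
  refine ⟨⟨fun C hC => hC.1, by simpa using smul_one_mem_matrixForms (one_mem P),
    fun A hA B hB => add_mem_matrixForms hA hB,
    fun A C hC => transpose_mul_mul_mem_matrixForms A hC⟩, fun r s hr hs => ?_⟩
  rcases n with _ | n
  · exact ⟨by simp [IsSymm], fun v => by simp⟩
  · exact smul_one_mem_matrixForms (mul_mem (by simpa using diag_mem_of_mem_matrixForms hr 0)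
      (by simpa using diag_mem_of_mem_matrixForms hs 0))

end RingPreordering

theorem TSgen_subset {n : ℕ} {R : Type*} [CommRing R] {S T : Set (Matrix (Fin n) (Fin n) R)}
    (hT : IsPre T) (hST : S ⊆ T) : TSgen S ⊆ T :=
  Set.sInter_subset_of_mem ⟨hT, hST⟩

namespace Polynomial

variable (R : Type*) [CommRing R] [LinearOrder R] [IsStrictOrderedRing R]

/-- Polynomials satisfying the first-order conditions at `0` for being nonnegative on a
neighbourhood of `0`: `p(0) ≥ 0`, and `p'(0) = 0` when `p(0) = 0`. -/
noncomputable def firstOrderNonneg : RingPreordering R[X] :=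
  .mk' {p | 0 ≤ p.coeff 0 ∧ (p.coeff 0 = 0 → p.coeff 1 = 0)}
    (fun {p q} ⟨hp, hp'⟩ ⟨hq, hq'⟩ => by
      refine ⟨by rw [coeff_add]; positivity, fun h => ?_⟩
      rw [coeff_add] at h ⊢
      rw [hp' (by linarith), hq' (by linarith), add_zero])
    (fun {p q} ⟨hp, hp'⟩ ⟨hq, hq'⟩ => by
      refine ⟨by rw [mul_coeff_zero]; positivity, fun h => ?_⟩
      rw [mul_coeff_zero, mul_eq_zero] at h
      rcases h with h | h
      · simp [mul_coeff_one, h, hp' h]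
      · simp [mul_coeff_one, h, hq' h])
    (fun p => by
      refine ⟨by rw [mul_coeff_zero]; exact mul_self_nonneg _, fun h => ?_⟩
      rw [mul_coeff_zero, mul_self_eq_zero] at h
      simp [mul_coeff_one, h])
    (by simp)

variable {R}

theorem mem_firstOrderNonneg {p : R[X]} :
    p ∈ firstOrderNonneg R ↔ 0 ≤ p.coeff 0 ∧ (p.coeff 0 = 0 → p.coeff 1 = 0) := .rfl

theorem X_pow_mem_firstOrderNonneg {n : ℕ} (hn : n ≠ 1) : X ^ n ∈ firstOrderNonneg R := by
  simp only [mem_firstOrderNonneg, coeff_X_pow, Ne.symm hn, if_false, implies_true, and_true]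
  split_ifs <;> norm_num

theorem mul_X_sub_X_pow_notMem_firstOrderNonneg {b : R[X]} (hb : b - 1 ∈ firstOrderNonneg R)
    (k : ℕ) : b * X - X ^ (2 * k) ∉ firstOrderNonneg R := by
  rintro ⟨h0, h1⟩
  have hb0 : 1 ≤ b.coeff 0 := by simpa using (mem_firstOrderNonneg.1 hb).1
  rcases Nat.eq_zero_or_pos k with rfl | hk
  · norm_num at h0
  · have hc0 : (b * X - X ^ (2 * k)).coeff 0 = 0 := by simp [coeff_X_pow]; omega
    have hc1 : (b * X - X ^ (2 * k)).coeff 1 = b.coeff 0 := by simp [coeff_X_pow]; omega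
    linarith [h1 hc0]

end Polynomial

theorem stmt18 :
    (∀ t : ℝ, 0 ≤ t → ∀ w : Fin 2 → ℝ, 0 ≤ w ⬝ᵥ (Fmat.map (Polynomial.eval t)).mulVec w) ∧
      ¬ ∃ b ∈ TSx, ∃ k : ℕ,
        ∃ C ∈ TSgen {(Polynomial.X : Polynomial ℝ) ^ 3 •
          (1 : Matrix (Fin 2) (Fin 2) (Polynomial ℝ))},
          b • Fmat = Fmat ^ (2 * k) + C := by
  refine ⟨fun t ht w => ?_, ?_⟩
  · have hform : w ⬝ᵥ (Fmat.map (eval t)) *ᵥ w = t * w 0 ^ 2 + w 1 ^ 2 := by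
      rw [Fmat, diagonal_map eval_zero, dotProduct, Fin.sum_univ_two, mulVec_diagonal,
        mulVec_diagonal]
      simp only [cons_val_zero, cons_val_one, cons_val_fin_one, eval_X, eval_one]
      ring
    rw [hform]
    positivity
  · rintro ⟨b, -, k, C, hC, hbC⟩
    set P := firstOrderNonneg ℝ
    have hgen : (X ^ 3 : ℝ[X]) • (1 : Matrix (Fin 2) (Fin 2) ℝ[X]) ∈ P.matrixForms (Fin 2) :=
      RingPreordering.smul_one_mem_matrixForms (X_pow_mem_firstOrderNonneg (n := 3) (by norm_num))
    have hCP : C ∈ P.matrixForms (Fin 2) :=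
      TSgen_subset (RingPreordering.isPre_matrixForms 2) (Set.singleton_subset_iff.2 hgen) hC
    have h00 := congrFun₂ hbC 0 0
    have h11 := congrFun₂ hbC 1 1
    simp only [Fmat, diagonal_pow, Matrix.smul_apply, Matrix.add_apply, diagonal_apply_eq,
      Pi.pow_apply, cons_val_zero, cons_val_one, cons_val_fin_one, smul_eq_mul, mul_one,
      one_pow] at h00 h11
    have hC00 : C 0 0 = b * X - X ^ (2 * k) := by linear_combination -h00
    have hC11 : C 1 1 = b - 1 := by linear_combination -h11
    exact mul_X_sub_X_pow_notMem_firstOrderNonneg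
      (hC11 ▸ RingPreordering.diag_mem_of_mem_matrixForms hCP 1) k
      (hC00 ▸ RingPreordering.diag_mem_of_mem_matrixForms hCP 0)
end
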